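/- The mapping that removes all scope-delimiter vertices from a λ-term-graph (connecting incoming edges of each S-vertex to its 0-th successor) and retains the abstraction-prefix function yields a λ-ho-term-graph, and it is a left inverse of the mapping that inserts a chain of delimiter vertices along every edge of a λ-ho-term-graph where the abstraction prefix decreases: first inserting delimiters and then removing them returns the original λ-ho-term-graph. -/

import Mathlib

/-- A (root-connected) term graph over signature `Sig` with arity function `ar`,
    with vertex type `V`. -/
structure TermGraph (Sig : Type) (ar : Sig → ℕ) (V : Type) where
  lab : V → Sig
  args : V → List V
  root : V
  arity_ok : ∀ v, (args v).length = ar (lab v)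
  rooted : ∀ v, Relation.ReflTransGen (fun a b => b ∈ args a) root v

/-- `R` is a bisimulation between term graphs `G₁` and `G₂`. -/
def IsBisim {Sig : Type} {ar : Sig → ℕ} {V₁ V₂ : Type}
    (G₁ : TermGraph Sig ar V₁) (G₂ : TermGraph Sig ar V₂)
    (R : V₁ → V₂ → Prop) : Prop :=
  R G₁.root G₂.root ∧
  (∀ v w, R v w → G₁.lab v = G₂.lab w) ∧
  (∀ v w, R v w → List.Forall₂ R (G₁.args v) (G₂.args w))

/-- `G₁` and `G₂` are bisimilar. -/
def Bisim {Sig : Type} {ar : Sig → ℕ} {V₁ V₂ : Type}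
    (G₁ : TermGraph Sig ar V₁) (G₂ : TermGraph Sig ar V₂) : Prop :=
  ∃ R, IsBisim G₁ G₂ R

/-- `h` is a homomorphism of term graphs: it maps root to root, preserves labels,
    and commutes with the argument function. -/
def IsHom {Sig : Type} {ar : Sig → ℕ} {V₁ V₂ : Type}
    (G₁ : TermGraph Sig ar V₁) (G₂ : TermGraph Sig ar V₂) (h : V₁ → V₂) : Prop :=
  h G₁.root = G₂.root ∧
  (∀ v, G₂.lab (h v) = G₁.lab v) ∧
  (∀ v, G₂.args (h v) = (G₁.args v).map h)

/-- There exists a functional bisimulation (homomorphism) from `G₁` to `G₂`. -/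
def FunBisim {Sig : Type} {ar : Sig → ℕ} {V₁ V₂ : Type}
    (G₁ : TermGraph Sig ar V₁) (G₂ : TermGraph Sig ar V₂) : Prop :=
  ∃ h, IsHom G₁ G₂ h

/-- The signature for first-order lambda term graphs with scope delimiters:
    application, abstraction, variable occurrence, scope delimiter, black hole. -/
inductive LamSig : Type
  | app | lam | var | del | bh
deriving DecidableEq

/-- Arities for the lambda signature with scope delimiters. -/
def arL : LamSig → ℕ
  | .app => 2
  | .lam => 1
  | .var => 1
  | .del => 2
  | .bh  => 0

/-- A correct abstraction-prefix function for a term graph over the lambda signature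
    with scope delimiters. -/
structure CorrectPrefix {V : Type} (G : TermGraph LamSig arL V)
    (P : V → List V) : Prop where
  root : P G.root = []
  blackhole : ∀ v, G.lab v = LamSig.bh → P v = []
  lamCond : ∀ w v, G.lab w = LamSig.lam → (G.args w)[0]? = some v →
    P v = P w ++ [w]
  appCond : ∀ w v (k : ℕ), G.lab w = LamSig.app → (G.args w)[k]? = some v →
    P v = P w
  varCond : ∀ w v, G.lab w = LamSig.var → (G.args w)[0]? = some v →
    G.lab v = LamSig.lam ∧ P v ++ [v] = P w
  delCond0 : ∀ w v, G.lab w = LamSig.del → (G.args w)[0]? = some v →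
    ∃ u, P v ++ [u] = P w
  delCond1 : ∀ w v, G.lab w = LamSig.del → (G.args w)[1]? = some v →
    G.lab v = LamSig.lam ∧ P v ++ [v] = P w

/-- The signature for lambda higher-order term graphs:
    application, abstraction, variable occurrence, black hole. -/
inductive HoSig : Type
  | app | lam | var | bh
deriving DecidableEq

/-- Arities for the higher-order lambda signature. -/
def arH : HoSig → ℕ
  | .app => 2
  | .lam => 1
  | .var => 1
  | .bh  => 0

/-- A correct abstraction-prefix function for a term graph over the higher-order
    lambda signature (the data of a lambda higher-order term graph). -/
structure CorrectPrefixHo {V : Type} (G : TermGraph HoSig arH V)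
    (P : V → List V) : Prop where
  root : P G.root = []
  blackhole : ∀ v, G.lab v = HoSig.bh → P v = []
  lamCond : ∀ w v, G.lab w = HoSig.lam → (G.args w)[0]? = some v →
    P v <+: P w ++ [w]
  appCond : ∀ w v (k : ℕ), G.lab w = HoSig.app → (G.args w)[k]? = some v →
    P v <+: P w
  varCond : ∀ w v, G.lab w = HoSig.var → (G.args w)[0]? = some v →
    G.lab v = HoSig.lam ∧ P v ++ [v] = P w

/-- Eager scope: for every vertex whose abstraction prefix ends in an abstraction
    vertex, there is a path to that abstraction vertex passing only through vertices
    whose prefixes extend the prefix of the starting vertex, whose last step goes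
    from a variable vertex to the abstraction vertex. -/
def EagerScope {V : Type} (G : TermGraph HoSig arH V) (P : V → List V) : Prop :=
  ∀ w p v, P w = p ++ [v] →
    ∃ ws : List V, ws.head? = some w ∧
      List.Chain' (fun a b => b ∈ G.args a) ws ∧
      (∀ u ∈ ws.tail, P w <+: P u) ∧
      ∃ wm, ws.getLast? = some wm ∧ G.lab wm = HoSig.var ∧
        (G.args wm)[0]? = some v

/-- The evident inclusion of the higher-order lambda signature into the lambda
    signature with scope delimiters. -/
def labToLam : HoSig → LamSig
  | .app => .app
  | .lam => .lam
  | .var => .var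
  | .bh  => .bh

/-- One step through a scope-delimiter vertex: from a delimiter vertex to its 0-th
    successor. -/
def SStep {V : Type} (G : TermGraph LamSig arL V) (x y : V) : Prop :=
  G.lab x = LamSig.del ∧ (G.args x)[0]? = some y

/-- The correspondence, via an embedding of vertices, between a term graph over the
    higher-order lambda signature (with an abstraction-prefix function) and a lambda
    term graph with scope delimiters: the higher-order graph is the result of
    removing all delimiter vertices from the first-order graph (connecting incoming
    edges of each delimiter vertex to its 0-th successor) while retaining the
    abstraction-prefix function; equivalently, the first-order graph results from
    the higher-order graph by inserting chains of delimiter vertices along edges at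
    which the abstraction prefix decreases. -/
def DelimCorr {V' V : Type} (H : TermGraph HoSig arH V') (P : V' → List V')
    (G : TermGraph LamSig arL V) (PG : V → List V) (ι : V' → V) : Prop :=
  Function.Injective ι ∧
  ι H.root = G.root ∧
  (∀ v, G.lab (ι v) = labToLam (H.lab v)) ∧
  (∀ a : V, G.lab a ≠ LamSig.del → ∃ v, ι v = a) ∧
  (∀ v, PG (ι v) = (P v).map ι) ∧
  (∀ v (i : ℕ) u, (H.args v)[i]? = some u ↔
    ∃ a, (G.args (ι v))[i]? = some a ∧
      Relation.ReflTransGen (SStep G) a (ι u))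

/-!
Along a chain of scope delimiters the abstraction prefix can only shrink, each delimiter dropping
its last entry, so the equations of a correct prefix function of `G`, pulled back along the
embedding, become the prefix conditions of a λ-ho-term-graph. A variable vertex points directly
at an abstraction vertex, so no delimiter chain intervenes and its equation survives unchanged.

Any two λ-ho-term-graphs obtained from `G` by removing delimiters embed onto the same set of
vertices, the non-delimiter ones, so `ι'⁻¹ ∘ ι` is a bijection between them. It is a homomorphism
because in both graphs an edge is read off `G` in the same way, by following the delimiter chain
from an edge of `G`.
-/

theorem labToLam_injective : Function.Injective labToLam := by
  intro a b h
  cases a <;> cases b <;> simp_all [labToLam]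

theorem labToLam_ne_del (s : HoSig) : labToLam s ≠ LamSig.del := by
  cases s <;> simp [labToLam]

section SStep

variable {V : Type} {G : TermGraph LamSig arL V} {a b : V}

theorem SStep.reflTransGen_eq_of_lab_ne_del (h : Relation.ReflTransGen (SStep G) a b)
    (ha : G.lab a ≠ LamSig.del) : b = a := by
  rcases Relation.ReflTransGen.cases_head h with rfl | ⟨c, hc, _⟩
  · rfl
  · exact absurd hc.1 ha

theorem CorrectPrefix.prefix_of_reflTransGen_sStep {PG : V → List V}
    (hG : CorrectPrefix G PG) (h : Relation.ReflTransGen (SStep G) a b) : PG b <+: PG a := by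
  induction h with
  | refl => exact List.prefix_refl _
  | tail _ hstep ih =>
    obtain ⟨u, hu⟩ := hG.delCond0 _ _ hstep.1 hstep.2
    exact (hu ▸ List.prefix_append _ [u]).trans ih

end SStep

namespace DelimCorr

section Removal

variable {V V' : Type} {H : TermGraph HoSig arH V'} {P : V' → List V'}
  {G : TermGraph LamSig arL V} {PG : V → List V} {ι : V' → V}

theorem injective (hc : DelimCorr H P G PG ι) : Function.Injective ι := hc.1

theorem map_root (hc : DelimCorr H P G PG ι) : ι H.root = G.root := hc.2.1

theorem lab_map (hc : DelimCorr H P G PG ι) (v : V') : G.lab (ι v) = labToLam (H.lab v) :=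
  hc.2.2.1 v

theorem prefix_map (hc : DelimCorr H P G PG ι) (v : V') : PG (ι v) = (P v).map ι :=
  hc.2.2.2.2.1 v

theorem args_getElem?_eq_some_iff (hc : DelimCorr H P G PG ι) (v : V') (i : ℕ) (u : V') :
    (H.args v)[i]? = some u ↔
      ∃ a, (G.args (ι v))[i]? = some a ∧ Relation.ReflTransGen (SStep G) a (ι u) :=
  hc.2.2.2.2.2 v i u

theorem range_eq (hc : DelimCorr H P G PG ι) : Set.range ι = {a | G.lab a ≠ LamSig.del} := by
  ext a
  constructor
  · rintro ⟨v, rfl⟩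
    exact (hc.lab_map v).trans_ne (labToLam_ne_del _)
  · exact hc.2.2.2.1 a

theorem prefix_eq_nil_iff (hc : DelimCorr H P G PG ι) {v : V'} : P v = [] ↔ PG (ι v) = [] := by
  rw [hc.prefix_map, List.map_eq_nil_iff]

theorem exists_getElem?_map_prefix (hc : DelimCorr H P G PG ι) (hG : CorrectPrefix G PG)
    {w v : V'} {i : ℕ} (hv : (H.args w)[i]? = some v) :
    ∃ a, (G.args (ι w))[i]? = some a ∧ (P v).map ι <+: PG a := by
  obtain ⟨a, ha, hchain⟩ := (hc.args_getElem?_eq_some_iff w i v).1 hv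
  exact ⟨a, ha, hc.prefix_map v ▸ hG.prefix_of_reflTransGen_sStep hchain⟩

theorem correctPrefixHo (hc : DelimCorr H P G PG ι) (hG : CorrectPrefix G PG) :
    CorrectPrefixHo H P where
  root := hc.prefix_eq_nil_iff.2 (hc.map_root ▸ hG.root)
  blackhole v hv := hc.prefix_eq_nil_iff.2 (hG.blackhole _ (by rw [hc.lab_map, hv]; rfl))
  lamCond w v hw hv := by
    obtain ⟨a, ha, hpre⟩ := hc.exists_getElem?_map_prefix hG hv
    rw [hG.lamCond _ a (by rw [hc.lab_map, hw]; rfl) ha, hc.prefix_map] at hpre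
    apply (List.prefix_map_iff_of_injective hc.injective).1
    rwa [List.map_append, List.map_singleton]
  appCond w v k hw hv := by
    obtain ⟨a, ha, hpre⟩ := hc.exists_getElem?_map_prefix hG hv
    rw [hG.appCond _ a k (by rw [hc.lab_map, hw]; rfl) ha, hc.prefix_map] at hpre
    exact (List.prefix_map_iff_of_injective hc.injective).1 hpre
  varCond w v hw hv := by
    obtain ⟨a, ha, hchain⟩ := (hc.args_getElem?_eq_some_iff w 0 v).1 hv
    obtain ⟨ha_lam, hpre⟩ := hG.varCond _ a (by rw [hc.lab_map, hw]; rfl) ha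
    obtain rfl := SStep.reflTransGen_eq_of_lab_ne_del hchain (by rw [ha_lam]; decide)
    refine ⟨labToLam_injective (by rw [← hc.lab_map, ha_lam]; rfl), hc.injective.list_map ?_⟩
    rw [List.map_append, List.map_singleton, ← hc.prefix_map, ← hc.prefix_map, hpre]

end Removal

section Uniqueness

variable {V V₁ V₂ : Type} {G : TermGraph LamSig arL V} {PG : V → List V}
  {H₁ : TermGraph HoSig arH V₁} {P₁ : V₁ → List V₁} {ι₁ : V₁ → V}
  {H₂ : TermGraph HoSig arH V₂} {P₂ : V₂ → List V₂} {ι₂ : V₂ → V}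
  (hc₁ : DelimCorr H₁ P₁ G PG ι₁) (hc₂ : DelimCorr H₂ P₂ G PG ι₂)

noncomputable def equiv : V₁ ≃ V₂ :=
  (Equiv.ofInjective ι₁ hc₁.injective).trans <|
    (Equiv.setCongr (hc₁.range_eq.trans hc₂.range_eq.symm)).trans
      (Equiv.ofInjective ι₂ hc₂.injective).symm

theorem map_equiv (v : V₁) : ι₂ (hc₁.equiv hc₂ v) = ι₁ v :=
  Equiv.apply_ofInjective_symm hc₂.injective _

variable {h : V₁ → V₂} (hh : ∀ v, ι₂ (h v) = ι₁ v)
include hc₁ hc₂ hh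

theorem lab_of_comp_eq (v : V₁) : H₂.lab (h v) = H₁.lab v :=
  labToLam_injective (by rw [← hc₂.lab_map, hh, hc₁.lab_map])

theorem args_getElem?_of_comp_eq {v u : V₁} {i : ℕ} (hu : (H₁.args v)[i]? = some u) :
    (H₂.args (h v))[i]? = some (h u) := by
  obtain ⟨a, ha, hchain⟩ := (hc₁.args_getElem?_eq_some_iff v i u).1 hu
  exact (hc₂.args_getElem?_eq_some_iff (h v) i (h u)).2 ⟨a, by rwa [hh], by rwa [hh]⟩

theorem isHom_of_comp_eq : IsHom H₁ H₂ h := by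
  refine ⟨hc₂.injective (by rw [hh, hc₁.map_root, hc₂.map_root]),
    lab_of_comp_eq hc₁ hc₂ hh, fun v => List.ext_getElem? fun i => ?_⟩
  cases hu : (H₁.args v)[i]? with
  | some u => rw [List.getElem?_map, hu, Option.map_some, args_getElem?_of_comp_eq hc₁ hc₂ hh hu]
  | none =>
    have hlen : (H₂.args (h v)).length = (H₁.args v).length := by
      rw [H₂.arity_ok, H₁.arity_ok, lab_of_comp_eq hc₁ hc₂ hh]
    rw [List.getElem?_eq_none_iff] at hu
    rw [List.getElem?_eq_none (by omega), List.getElem?_eq_none (by simpa using hu)]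

theorem map_prefix_of_comp_eq (w : V₁) : (P₁ w).map h = P₂ (h w) := by
  apply hc₂.injective.list_map
  rw [← hc₂.prefix_map, hh, hc₁.prefix_map, List.map_map]
  exact List.map_congr_left fun v _ => hh v

end Uniqueness

end DelimCorr

/-- Removing all scope-delimiter vertices from a lambda term graph (with correct
    abstraction-prefix function) and retaining the prefixes yields a lambda
    higher-order term graph (the retained prefix function is correct in the
    higher-order sense); and this removal operation is a left inverse of delimiter
    insertion: first inserting delimiter chains into a lambda higher-order term
    graph and then removing them returns the original lambda higher-order term
    graph (via a prefix-preserving isomorphism). -/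
theorem delimiter_removal_correct_and_left_inverse_of_insertion
    {V V' : Type} (G : TermGraph LamSig arL V) (PG : V → List V)
    (hG : CorrectPrefix G PG)
    (H' : TermGraph HoSig arH V') (P' : V' → List V') (ι' : V' → V)
    (hrem : DelimCorr H' P' G PG ι') :
    CorrectPrefixHo H' P' ∧
    ∀ {V'' : Type} (H : TermGraph HoSig arH V'') (P : V'' → List V'')
      (ι : V'' → V), CorrectPrefixHo H P → DelimCorr H P G PG ι →
      ∃ h : V'' → V', IsHom H H' h ∧ Function.Bijective h ∧
        ∀ w, (P w).map h = P' (h w) := by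
  refine ⟨hrem.correctPrefixHo hG, fun H P ι _ hc => ?_⟩
  have hcomp := hc.map_equiv hrem
  exact ⟨hc.equiv hrem, hc.isHom_of_comp_eq hrem hcomp, (hc.equiv hrem).bijective,
    hc.map_prefix_of_comp_eq hrem hcomp⟩
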